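/- arXiv:1911.09764 — 3 statements merged into one kernel-verified Lean document; each statement's English description precedes it below -/
import Mathlib

section
/- Orthogonality of Hermite polynomials with respect to the standard Gaussian measure: for all natural numbers m and n, ∫ Hₘ(x) · Hₙ(x) d(gaussianReal 0 1)(x) = m! if m = n, and = 0 if m ≠ n. (This expresses that the eigenspaces of the Ornstein–Uhlenbeck operator corresponding to distinct eigenvalues, spanned by the Hermite polynomials, are mutually orthogonal in L² of the Gaussian measure, with ‖Hₙ‖²_{L²} = n!.) -/
/-!
Since the standard Gaussian density satisfies `φ' = -x φ`, integration by parts makes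
`p ↦ X p - p'` the adjoint of differentiation in `L²(γ)` on polynomials. As
`Hₙ₊₁ = X Hₙ - Hₙ'` and `Hₙ₊₁' = (n + 1) Hₙ`, this gives
`⟨Hₘ₊₁, Hₙ₊₁⟩ = ⟨Hₘ, Hₙ₊₁'⟩ = (n + 1) ⟨Hₘ, Hₙ⟩`, while `⟨Hₘ₊₁, H₀⟩ = ⟨Hₘ, H₀'⟩ = 0`;
induction on `m` then reduces everything to `⟨H₀, H₀⟩ = 1`.
-/

open MeasureTheory ProbabilityTheory Polynomial
open scoped NNReal

namespace Polynomial

lemma derivative_hermite_succ (n : ℕ) :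
    derivative (hermite (n + 1)) = (n + 1 : ℤ[X]) * hermite n := by
  induction n with
  | zero => simp [hermite_zero]
  | succ n ih =>
    rw [hermite_succ (n + 1), derivative_sub, derivative_mul, derivative_X, ih,
      derivative_mul, derivative_add, derivative_natCast, derivative_one, hermite_succ n]
    push_cast
    ring

end Polynomial

namespace ProbabilityTheory

lemma integrable_gaussianReal_iff {μ : ℝ} {v : ℝ≥0} (hv : v ≠ 0) {f : ℝ → ℝ} :
    Integrable f (gaussianReal μ v) ↔ Integrable (fun x ↦ gaussianPDFReal μ v x * f x) := by
  rw [gaussianReal_of_var_ne_zero μ hv,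
    integrable_withDensity_iff_integrable_smul' (measurable_gaussianPDF μ v)
      (ae_of_all _ fun _ ↦ gaussianPDF_lt_top)]
  simp_rw [toReal_gaussianPDF, smul_eq_mul]

lemma hasDerivAt_gaussianPDFReal (μ : ℝ) (v : ℝ≥0) (x : ℝ) :
    HasDerivAt (gaussianPDFReal μ v) (-((x - μ) / v) * gaussianPDFReal μ v x) x := by
  have h : HasDerivAt (fun y ↦ -(y - μ) ^ 2 / (2 * v)) (-((x - μ) / v)) x :=
    ((((hasDerivAt_id x).sub_const μ).pow 2).neg.div_const (2 * (v : ℝ))).congr_deriv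
      (by simp; ring)
  rw [gaussianPDFReal_def]
  exact (h.exp.const_mul (√(2 * Real.pi * v))⁻¹).congr_deriv (by ring)

lemma integrable_aeval_gaussianReal {R : Type*} [CommSemiring R] [Algebra R ℝ] (μ : ℝ)
    (v : ℝ≥0) (p : R[X]) : Integrable (fun x ↦ aeval x p) (gaussianReal μ v) := by
  induction p using Polynomial.induction_on' with
  | add p q hp hq => simpa using hp.fun_add hq
  | monomial k c =>
    have hk : Integrable (fun x : ℝ ↦ x ^ k) (gaussianReal μ v) :=
      (memLp_id_gaussianReal k).integrable_norm_pow'.mono' (by fun_prop)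
        (ae_of_all _ fun x ↦ by simp)
    simpa [aeval_monomial] using hk.const_mul (algebraMap R ℝ c)

lemma integral_sub_mul_gaussianReal {μ : ℝ} {v : ℝ≥0} (hv : v ≠ 0) {f f' : ℝ → ℝ}
    (hf : ∀ x, HasDerivAt f (f' x) x) (hf_int : Integrable f (gaussianReal μ v))
    (hf'_int : Integrable f' (gaussianReal μ v))
    (hxf_int : Integrable (fun x ↦ (x - μ) * f x) (gaussianReal μ v)) :
    ∫ x, (x - μ) * f x ∂gaussianReal μ v = v * ∫ x, f' x ∂gaussianReal μ v := by
  set φ := gaussianPDFReal μ v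
  have hv' : (v : ℝ) ≠ 0 := mod_cast hv
  have ibp : ∫ x, f x * (-((x - μ) / v) * φ x) = -∫ x, f' x * φ x := by
    refine integral_mul_deriv_eq_deriv_mul_of_integrable (fun x _ ↦ hf x)
      (fun x _ ↦ hasDerivAt_gaussianPDFReal μ v x) ?_ ?_ ?_
    · refine (((integrable_gaussianReal_iff hv).1 hxf_int).const_mul (-(v : ℝ)⁻¹)).congr
        (ae_of_all _ fun x ↦ ?_)
      simp only [Pi.mul_apply]
      ring
    · exact ((integrable_gaussianReal_iff hv).1 hf'_int).congr (ae_of_all _ fun _ ↦ mul_comm _ _)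
    · exact ((integrable_gaussianReal_iff hv).1 hf_int).congr (ae_of_all _ fun _ ↦ mul_comm _ _)
  simp_rw [integral_gaussianReal_eq_integral_smul hv, smul_eq_mul]
  calc ∫ x, φ x * ((x - μ) * f x) = -v * ∫ x, f x * (-((x - μ) / v) * φ x) := by
        rw [← integral_const_mul]
        congr 1 with x
        field_simp
    _ = v * ∫ x, φ x * f' x := by
        rw [ibp]
        simp_rw [mul_comm (f' _)]
        ring

lemma integral_aeval_X_mul_sub_derivative_gaussianReal {R : Type*} [CommRing R] [Algebra R ℝ]
    (p : R[X]) : ∫ x, aeval x (X * p - derivative p) ∂gaussianReal 0 1 = 0 := by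
  have stein := integral_sub_mul_gaussianReal one_ne_zero (fun x ↦ p.hasDerivAt_aeval x)
    (integrable_aeval_gaussianReal 0 1 p) (integrable_aeval_gaussianReal 0 1 _)
    ((integrable_aeval_gaussianReal 0 1 (X * p)).congr (ae_of_all _ fun x ↦ by simp))
  simp only [map_sub, map_mul, aeval_X]
  rw [integral_sub ((integrable_aeval_gaussianReal 0 1 (X * p)).congr (by simp))
    (integrable_aeval_gaussianReal 0 1 _)]
  simpa [sub_eq_zero] using stein

lemma integral_aeval_hermite_succ_mul (n : ℕ) (q : ℤ[X]) :
    ∫ x, aeval x (hermite (n + 1)) * aeval x q ∂gaussianReal 0 1 =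
      ∫ x, aeval x (hermite n) * aeval x (derivative q) ∂gaussianReal 0 1 := by
  have h : hermite (n + 1) * q - hermite n * derivative q =
      X * (hermite n * q) - derivative (hermite n * q) := by
    rw [hermite_succ, derivative_mul]
    ring
  simp_rw [← map_mul]
  rw [← sub_eq_zero, ← integral_sub (integrable_aeval_gaussianReal 0 1 _)
    (integrable_aeval_gaussianReal 0 1 _)]
  simp_rw [← map_sub, h]
  exact integral_aeval_X_mul_sub_derivative_gaussianReal _

end ProbabilityTheory

/-- Orthogonality of the probabilists' Hermite polynomials in `L²` of the standard
Gaussian measure: `∫ Hₘ·Hₙ dγ = m!` if `m = n` and `0` otherwise. -/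
theorem hermite_orthogonal_gaussian (m n : ℕ) :
    ∫ x : ℝ, (aeval x (hermite m)) * (aeval x (hermite n)) ∂(gaussianReal 0 1) =
      if m = n then (Nat.factorial m : ℝ) else 0 := by
  induction m generalizing n with
  | zero =>
    cases n with
    | zero => simp [hermite_zero]
    | succ n => simpa [hermite_zero] using integral_aeval_hermite_succ_mul n 1
  | succ m ih =>
    rw [integral_aeval_hermite_succ_mul]
    cases n with
    | zero => simp [hermite_zero]
    | succ n =>
      have hd (x : ℝ) : aeval x (hermite m) * aeval x (derivative (hermite (n + 1))) =
          (n + 1) * (aeval x (hermite m) * aeval x (hermite n)) := by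
        simp only [derivative_hermite_succ, map_mul, map_add, map_natCast, map_one]
        ring
      simp_rw [hd]
      rw [integral_const_mul, ih]
      rcases eq_or_ne m n with rfl | hmn
      · simp [Nat.factorial_succ]
      · simp [hmn]
end

section
/- Hölder continuity of Brownian paths: let (Ω, P) be a probability space and X : ℝ≥0 → Ω → ℝ a stochastic process such that X 0 = 0 almost surely and, for all 0 ≤ s ≤ t, the law of X t − X s under P is the Gaussian measure gaussianReal 0 (t − s). Then there is a modification Y of X (i.e. for each t, Y t = X t almost surely) such that for every α with 0 < α < 1/2, almost surely, the path t ↦ Y t ω is Hölder continuous of exponent α on every compact interval [0, T]. -/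
open MeasureTheory ProbabilityTheory NNReal Real Filter Topology

lemma gauss_tail (v : ℝ≥0) {w ε : ℝ} (hw : 0 < w) (hvw : (v:ℝ) ≤ w) (hε : 0 < ε) :
    gaussianReal 0 v {x | ε ≤ |x|} ≤ ENNReal.ofReal (2 * Real.exp (-(ε^2) / (4*w))) := by
  have hs : MeasurableSet {x : ℝ | ε ≤ |x|} := by
    have : {x : ℝ | ε ≤ |x|} = (fun x : ℝ => |x|) ⁻¹' (Set.Ici ε) := rfl
    rw [this]; exact (measurable_abs) measurableSet_Ici
  rcases eq_or_ne v 0 with hv | hv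
  · subst hv
    rw [gaussianReal_zero_var, Measure.dirac_apply' _ hs]
    simp only [Set.indicator_apply, Set.mem_setOf_eq, abs_zero]
    rw [if_neg (by linarith)]
    exact zero_le
  · have hv' : (0:ℝ) < v := by positivity
    set c := Real.exp (-(ε^2) / (4*w)) with hc
    have hc0 : 0 < c := Real.exp_pos _
    set g : ℝ → ℝ := fun x => (Real.sqrt (2*π*v))⁻¹ * Real.exp (-((4*(v:ℝ))⁻¹) * x^2) with hg
    have hgint : Integrable g := (integrable_exp_neg_mul_sq (by positivity)).const_mul _
    have hgm : Measurable g := by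
      apply Measurable.const_mul
      exact Real.measurable_exp.comp ((measurable_id.pow_const 2).const_mul _)
    have hpt : ∀ x ∈ {x : ℝ | ε ≤ |x|}, gaussianPDF 0 v x ≤ ENNReal.ofReal (c * g x) := by
      intro x hx
      have hεx : ε ≤ |x| := hx
      rw [gaussianPDF]
      apply ENNReal.ofReal_le_ofReal
      rw [gaussianPDFReal, hg, hc]
      have hx2 : ε^2 ≤ x^2 := by
        nlinarith [mul_self_le_mul_self hε.le hεx, sq_abs x]
      have h1 : ε^2 / (4*w) ≤ x^2 / (4*(v:ℝ)) := by
        apply div_le_div₀ (by positivity) hx2 (by positivity)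
        linarith
      have hexp : Real.exp (-(x - 0)^2 / (2*(v:ℝ))) ≤
          Real.exp (-(ε^2) / (4*w)) * Real.exp (-((4*(v:ℝ))⁻¹) * x^2) := by
        rw [← Real.exp_add]
        apply Real.exp_le_exp.mpr
        rw [sub_zero]
        have e1 : (-((4*(v:ℝ))⁻¹)) * x^2 = -(x^2/(4*(v:ℝ))) := by
          rw [neg_mul, inv_mul_eq_div]
        have e2 : x^2/(2*(v:ℝ)) = x^2/(4*(v:ℝ)) + x^2/(4*(v:ℝ)) := by
          field_simp; ring
        rw [e1, neg_div, neg_div, e2]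
        linarith
      calc (Real.sqrt (2*π*v))⁻¹ * Real.exp (-(x-0)^2 / (2*(v:ℝ)))
          ≤ (Real.sqrt (2*π*v))⁻¹ * (Real.exp (-(ε^2) / (4*w)) * Real.exp (-((4*(v:ℝ))⁻¹) * x^2)) := by
            apply mul_le_mul_of_nonneg_left hexp (by positivity)
        _ = Real.exp (-(ε^2)/(4*w)) * ((Real.sqrt (2*π*v))⁻¹ * Real.exp (-((4*(v:ℝ))⁻¹) * x^2)) := by ring
    calc gaussianReal 0 v {x | ε ≤ |x|} = ∫⁻ x in {x | ε ≤ |x|}, gaussianPDF 0 v x :=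
          gaussianReal_apply 0 hv _
      _ ≤ ∫⁻ x in {x | ε ≤ |x|}, ENNReal.ofReal (c * g x) :=
          setLIntegral_mono (ENNReal.measurable_ofReal.comp (hgm.const_mul c)) hpt
      _ ≤ ∫⁻ x, ENNReal.ofReal (c * g x) := setLIntegral_le_lintegral _ _
      _ = ENNReal.ofReal (∫ x, c * g x) := by
          rw [← ofReal_integral_eq_lintegral_ofReal (hgint.const_mul c)]
          exact Filter.Eventually.of_forall fun x => by positivity
      _ ≤ ENNReal.ofReal (2 * c) := by
          apply ENNReal.ofReal_le_ofReal
          rw [integral_const_mul, hg, integral_const_mul, integral_gaussian]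
          have h4 : π / (4*(v:ℝ))⁻¹ = 2 * (2*π*(v:ℝ)) := by field_simp; ring
          rw [h4, Real.sqrt_mul (by norm_num : (0:ℝ) ≤ 2)]
          have hne : Real.sqrt (2*π*(v:ℝ)) ≠ 0 := by positivity
          have e : (Real.sqrt (2*π*(v:ℝ)))⁻¹ * (Real.sqrt 2 * Real.sqrt (2*π*(v:ℝ)))
              = Real.sqrt 2 := by field_simp
          rw [e]
          have h2 : Real.sqrt 2 ≤ 2 := by
            nlinarith [Real.sq_sqrt (by norm_num : (0:ℝ) ≤ 2), Real.sqrt_nonneg 2]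
          nlinarith
      _ = ENNReal.ofReal (2 * Real.exp (-(ε^2) / (4*w))) := rfl

noncomputable def dyad (n k : ℕ) : ℝ≥0 := (k : ℝ≥0) / 2^n

lemma dyad_comp (n k : ℕ) : dyad (n+1) (2*k) = dyad n k := by
  rw [dyad, dyad]
  rw [pow_succ]
  push_cast
  rw [div_eq_div_iff (by positivity) (by positivity)]
  ring

lemma dyad_mono {n k k' : ℕ} (h : k ≤ k') : dyad n k ≤ dyad n k' := by
  rw [dyad, dyad]
  gcongr

lemma dyad_sub (n k : ℕ) : dyad n (k+1) - dyad n k = ((2:ℝ≥0)^n)⁻¹ := by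
  apply tsub_eq_of_eq_add_rev
  rw [dyad, dyad]
  rw [div_eq_iff (by positivity : ((2:ℝ≥0)^n) ≠ 0)]
  push_cast
  rw [add_mul, inv_mul_cancel₀ (by positivity : ((2:ℝ≥0)^n) ≠ 0)]
  rw [div_mul_cancel₀ _ (by positivity : ((2:ℝ≥0)^n) ≠ 0)]

lemma prob_le {Ω : Type*} [MeasurableSpace Ω] (P : Measure Ω) [IsProbabilityMeasure P]
    (X : ℝ≥0 → Ω → ℝ)
    (hincr : ∀ s t : ℝ≥0, s ≤ t →
      Measure.map (fun ω => X t ω - X s ω) P = gaussianReal 0 (t - s))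
    {s t : ℝ≥0} (hst : s ≤ t) {w ε : ℝ} (hw : 0 < w) (hvw : ((t - s : ℝ≥0):ℝ) ≤ w)
    (hε : 0 < ε) :
    P {ω | ε ≤ |X t ω - X s ω|} ≤ ENNReal.ofReal (2 * Real.exp (-(ε^2) / (4*w))) := by
  have hmap := hincr s t hst
  have haem : AEMeasurable (fun ω => X t ω - X s ω) P := by
    by_contra h
    rw [Measure.map_of_not_aemeasurable h] at hmap
    have h1 : (gaussianReal 0 (t - s)) Set.univ = 1 := measure_univ
    rw [← hmap] at h1
    simp at h1
  have hs : MeasurableSet {x : ℝ | ε ≤ |x|} := by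
    have : {x : ℝ | ε ≤ |x|} = (fun x : ℝ => |x|) ⁻¹' (Set.Ici ε) := rfl
    rw [this]; exact measurable_abs measurableSet_Ici
  have heq : {ω | ε ≤ |X t ω - X s ω|} = (fun ω => X t ω - X s ω) ⁻¹' {x | ε ≤ |x|} := rfl
  rw [heq, ← Measure.map_apply_of_aemeasurable haem hs, hmap]
  exact gauss_tail _ hw hvw hε

lemma sum_exp {c ρ : ℝ} (hc : 0 ≤ c) (hρ : 1 < ρ) :
    Summable (fun n : ℕ => c * 2^n * (2 * Real.exp (-ρ^n/4))) := by
  apply summable_of_ratio_norm_eventually_le (r := 1/2) (by norm_num)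
  have hev : ∀ᶠ n : ℕ in Filter.atTop, (4:ℝ) * Real.log 4 / (ρ-1) ≤ ρ^n :=
    (tendsto_pow_atTop_atTop_of_one_lt hρ).eventually_ge_atTop _
  filter_upwards [hev] with n hn
  have hρ0 : (0:ℝ) < ρ := by linarith
  have hρn0 : (0:ℝ) < ρ^n := pow_pos hρ0 n
  have key : Real.exp (-ρ^(n+1)/4) * 4 ≤ Real.exp (-ρ^n/4) := by
    have h1 : (4:ℝ) * Real.log 4 ≤ ρ^n * (ρ - 1) := by
      rw [div_le_iff₀ (by linarith : (0:ℝ) < ρ - 1)] at hn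
      linarith
    have h2 : Real.log 4 ≤ (ρ^(n+1) - ρ^n)/4 := by
      rw [pow_succ]
      nlinarith
    have h3 : (4:ℝ) ≤ Real.exp ((ρ^(n+1) - ρ^n)/4) := by
      calc (4:ℝ) = Real.exp (Real.log 4) := (Real.exp_log (by norm_num)).symm
        _ ≤ _ := Real.exp_le_exp.mpr h2
    have h4 : Real.exp (-ρ^n/4) = Real.exp (-ρ^(n+1)/4) * Real.exp ((ρ^(n+1) - ρ^n)/4) := by
      rw [← Real.exp_add]; ring_nf
    rw [h4]
    have h5 := Real.exp_pos (-ρ^(n+1)/4)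
    nlinarith
  have hf1 : (0:ℝ) ≤ c * 2^n * (2 * Real.exp (-ρ^n/4)) := by positivity
  have hf2 : (0:ℝ) ≤ c * 2^(n+1) * (2 * Real.exp (-ρ^(n+1)/4)) := by positivity
  rw [Real.norm_of_nonneg hf2, Real.norm_of_nonneg hf1]
  have h2n : (0:ℝ) ≤ c * 2^n := by positivity
  calc c * 2^(n+1) * (2 * Real.exp (-ρ^(n+1)/4))
      = c * 2^n * (Real.exp (-ρ^(n+1)/4) * 4) := by rw [pow_succ]; ring
    _ ≤ c * 2^n * Real.exp (-ρ^n/4) := by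
        apply mul_le_mul_of_nonneg_left key h2n
    _ = 1/2 * (c * 2^n * (2 * Real.exp (-ρ^n/4))) := by ring

lemma good_event {Ω : Type*} [MeasurableSpace Ω] (P : Measure Ω) [IsProbabilityMeasure P]
    (X : ℝ≥0 → Ω → ℝ)
    (hincr : ∀ s t : ℝ≥0, s ≤ t →
      Measure.map (fun ω => X t ω - X s ω) P = gaussianReal 0 (t - s))
    {α' : ℝ} (h0 : 0 < α') (h2 : α' < 1/2) (N : ℕ) :
    ∀ᵐ ω ∂P, ∀ᶠ n : ℕ in Filter.atTop, ∀ k, k + 1 ≤ N * 2^n →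
      |X (dyad n (k+1)) ω - X (dyad n k) ω| ≤ ((2:ℝ)^(-α'))^n := by
  set r : ℝ := (2:ℝ)^(-α') with hrdef
  have hr0 : 0 < r := Real.rpow_pos_of_pos (by norm_num) _
  set ρ : ℝ := 2 * r^2 with hρdef
  have hρ1 : 1 < ρ := by
    have e1 : r^2 = (2:ℝ)^(-(2*α')) := by
      rw [hrdef, ← Real.rpow_natCast ((2:ℝ)^(-α')) 2, ← Real.rpow_mul (by norm_num)]
      norm_num; ring_nf
    have e2 : ρ = (2:ℝ)^(1-2*α') := by
      rw [hρdef, e1]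
      rw [show (1-2*α') = 1 + (-(2*α')) by ring, Real.rpow_add (by norm_num), Real.rpow_one]
    rw [e2]
    calc (1:ℝ) = (2:ℝ)^(0:ℝ) := (Real.rpow_zero 2).symm
      _ < (2:ℝ)^(1-2*α') := Real.rpow_lt_rpow_of_exponent_lt (by norm_num) (by linarith)
  have hP : ∀ n : ℕ, P {ω | ∃ k, k + 1 ≤ N * 2^n ∧ r^n ≤ |X (dyad n (k+1)) ω - X (dyad n k) ω|}
      ≤ ENNReal.ofReal ((N:ℝ) * 2^n * (2 * Real.exp (-ρ^n/4))) := by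
    intro n
    have hsub : {ω | ∃ k, k + 1 ≤ N * 2^n ∧ r^n ≤ |X (dyad n (k+1)) ω - X (dyad n k) ω|}
        ⊆ ⋃ k ∈ Finset.range (N * 2^n), {ω | r^n ≤ |X (dyad n (k+1)) ω - X (dyad n k) ω|} := by
      intro ω hω
      obtain ⟨k, hk1, hk2⟩ := hω
      exact Set.mem_biUnion (Finset.mem_range.mpr (by omega)) hk2
    have hsingle : ∀ k : ℕ, P {ω | r^n ≤ |X (dyad n (k+1)) ω - X (dyad n k) ω|}
        ≤ ENNReal.ofReal (2 * Real.exp (-ρ^n/4)) := by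
      intro k
      have hvar : ((dyad n (k+1) - dyad n k : ℝ≥0):ℝ) ≤ ((2:ℝ)^n)⁻¹ := by
        rw [dyad_sub]
        push_cast
        exact le_refl _
      have hbound := prob_le P X hincr (dyad_mono (by omega : k ≤ k+1))
        (by positivity : (0:ℝ) < ((2:ℝ)^n)⁻¹) hvar (pow_pos hr0 n)
      have hexp : -(r^n)^2 / (4 * ((2:ℝ)^n)⁻¹) = -ρ^n / 4 := by
        rw [hρdef, mul_pow]
        have h2n : ((2:ℝ)^n) ≠ 0 := by positivity
        field_simp
        ring
      rwa [hexp] at hbound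
    calc P {ω | ∃ k, k + 1 ≤ N * 2^n ∧ r^n ≤ |X (dyad n (k+1)) ω - X (dyad n k) ω|}
        ≤ P (⋃ k ∈ Finset.range (N * 2^n), {ω | r^n ≤ |X (dyad n (k+1)) ω - X (dyad n k) ω|}) :=
          measure_mono hsub
      _ ≤ ∑ k ∈ Finset.range (N * 2^n), P {ω | r^n ≤ |X (dyad n (k+1)) ω - X (dyad n k) ω|} :=
          measure_biUnion_finset_le _ _
      _ ≤ ∑ _k ∈ Finset.range (N * 2^n), ENNReal.ofReal (2 * Real.exp (-ρ^n/4)) :=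
          Finset.sum_le_sum (fun k _ => hsingle k)
      _ = (N * 2^n : ℕ) * ENNReal.ofReal (2 * Real.exp (-ρ^n/4)) := by
          rw [Finset.sum_const, Finset.card_range, nsmul_eq_mul]
      _ = ENNReal.ofReal ((N:ℝ) * 2^n * (2 * Real.exp (-ρ^n/4))) := by
          rw [← ENNReal.ofReal_natCast (N * 2^n), ← ENNReal.ofReal_mul (by positivity)]
          congr 1
          push_cast
          ring
  have hsummable := sum_exp (c := (N:ℝ)) (Nat.cast_nonneg N) hρ1
  have htsum : ∑' n : ℕ, P {ω | ∃ k, k + 1 ≤ N * 2^n ∧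
      r^n ≤ |X (dyad n (k+1)) ω - X (dyad n k) ω|} ≠ ⊤ := by
    apply ne_top_of_le_ne_top _ (ENNReal.tsum_le_tsum hP)
    rw [← ENNReal.ofReal_tsum_of_nonneg (fun n => by positivity) hsummable]
    exact ENNReal.ofReal_ne_top
  have hzero := measure_setOf_frequently_eq_zero htsum
  rw [ae_iff]
  apply measure_mono_null _ hzero
  intro ω hω
  simp only [Set.mem_setOf_eq] at hω ⊢
  rw [Filter.not_eventually] at hω
  apply Filter.Frequently.mono hω
  intro n hn
  push_neg at hn
  obtain ⟨k, hk1, hk2⟩ := hn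
  exact ⟨k, hk1, hk2.le⟩

noncomputable def approxd (n : ℕ) (t : ℝ≥0) : ℕ := ⌊t * 2^n⌋₊

lemma approxd_le (n : ℕ) (t : ℝ≥0) : dyad n (approxd n t) ≤ t := by
  rw [dyad, div_le_iff₀ (by positivity : (0:ℝ≥0) < (2:ℝ≥0)^n)]
  exact Nat.floor_le (zero_le)

lemma le_approxd (n : ℕ) (t : ℝ≥0) : t ≤ dyad n (approxd n t) + ((2:ℝ≥0)^n)⁻¹ := by
  have h2n : (0:ℝ≥0) < (2:ℝ≥0)^n := by positivity
  have h1 : t * 2^n ≤ (approxd n t : ℝ≥0) + 1 := (Nat.lt_floor_add_one _).le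
  calc t = t * 2^n / 2^n := by rw [mul_div_cancel_right₀ _ h2n.ne']
    _ ≤ ((approxd n t : ℝ≥0) + 1) / 2^n := by gcongr
    _ = dyad n (approxd n t) + ((2:ℝ≥0)^n)⁻¹ := by
        rw [dyad, add_div, one_div]

lemma approxd_succ (n : ℕ) (t : ℝ≥0) :
    approxd (n+1) t = 2 * approxd n t ∨ approxd (n+1) t = 2 * approxd n t + 1 := by
  have h1 : 2 * approxd n t ≤ approxd (n+1) t := by
    apply Nat.le_floor
    have : (approxd n t : ℝ≥0) ≤ t * 2^n := Nat.floor_le (zero_le)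
    push_cast
    calc (2:ℝ≥0) * (approxd n t : ℝ≥0) ≤ 2 * (t * 2^n) := by gcongr
      _ = t * 2^(n+1) := by rw [pow_succ]; ring
  have h2 : approxd (n+1) t < 2 * approxd n t + 2 := by
    rw [approxd, Nat.floor_lt (zero_le)]
    have : t * 2^n < (approxd n t : ℝ≥0) + 1 := Nat.lt_floor_add_one _
    calc t * 2^(n+1) = 2 * (t * 2^n) := by rw [pow_succ]; ring
      _ < 2 * ((approxd n t : ℝ≥0) + 1) := by gcongr <;> norm_num
      _ = ((2 * approxd n t + 2 : ℕ) : ℝ≥0) := by push_cast; ring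
  omega

lemma approxd_mono (n : ℕ) {s t : ℝ≥0} (h : s ≤ t) : approxd n s ≤ approxd n t :=
  Nat.floor_le_floor (by gcongr)

lemma approxd_lt {N n : ℕ} {t : ℝ≥0} (h : t < N) : approxd n t < N * 2^n := by
  rw [approxd, Nat.floor_lt (zero_le)]
  push_cast
  have h2n : (0:ℝ≥0) < (2:ℝ≥0)^n := by positivity
  exact mul_lt_mul_of_pos_right h h2n

lemma rho_gt_one {a : ℝ} (h0 : 0 < a) (h2 : a < 1/2) : 1 < 2 * ((2:ℝ)^(-a))^2 := by
  have e1 : ((2:ℝ)^(-a))^2 = (2:ℝ)^(-(2*a)) := by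
    rw [← Real.rpow_natCast ((2:ℝ)^(-a)) 2, ← Real.rpow_mul (by norm_num)]
    norm_num; ring_nf
  have e2 : 2 * ((2:ℝ)^(-a))^2 = (2:ℝ)^(1-2*a) := by
    rw [e1, show (1-2*a) = 1 + (-(2*a)) by ring, Real.rpow_add (by norm_num), Real.rpow_one]
  rw [e2]
  calc (1:ℝ) = (2:ℝ)^(0:ℝ) := (Real.rpow_zero 2).symm
    _ < (2:ℝ)^(1-2*a) := Real.rpow_lt_rpow_of_exponent_lt (by norm_num) (by linarith)

lemma conv_good {Ω : Type*} (X : ℝ≥0 → Ω → ℝ) {α' : ℝ} (hα'0 : 0 < α') (hα'1 : α' < 1/2) (ω : Ω)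
    (hω : ∀ N : ℕ, ∀ᶠ n : ℕ in Filter.atTop, ∀ k, k + 1 ≤ N * 2^n →
      |X (dyad n (k+1)) ω - X (dyad n k) ω| ≤ ((2:ℝ)^(-α'))^n)
    (t : ℝ≥0) : ∃ l, Filter.Tendsto (fun n => X (dyad n (approxd n t)) ω) Filter.atTop (𝓝 l) := by
  set r : ℝ := (2:ℝ)^(-α') with hrdef
  have hr0 : 0 < r := Real.rpow_pos_of_pos (by norm_num) _
  have hr1 : r < 1 := Real.rpow_lt_one_of_one_lt_of_neg (by norm_num) (by linarith)
  set N : ℕ := ⌊t⌋₊ + 1 with hNdef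
  have htN : t < (N:ℝ≥0) := by
    have := Nat.lt_succ_floor t
    rw [hNdef]
    push_cast
    exact_mod_cast this
  obtain ⟨n₀, hn₀⟩ := Filter.eventually_atTop.mp (hω N)
  set f : ℕ → ℝ := fun m => X (dyad (n₀+m) (approxd (n₀+m) t)) ω with hfdef
  have hstep : ∀ m, dist (f m) (f (m+1)) ≤ r^(n₀+1) * r^m := by
    intro m
    set n : ℕ := n₀ + m with hndef
    have hb : approxd n t < N * 2^n := approxd_lt htN
    have hpow : r^(n+1) = r^(n₀+1) * r^m := by
      rw [hndef, ← pow_add]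
      congr 1
      omega
    rcases approxd_succ n t with he | he
    · show dist (X (dyad n (approxd n t)) ω) (X (dyad (n+1) (approxd (n+1) t)) ω) ≤ _
      rw [he, dyad_comp]
      rw [dist_self]
      positivity
    · show dist (X (dyad n (approxd n t)) ω) (X (dyad (n+1) (approxd (n+1) t)) ω) ≤ _
      rw [he]
      rw [← hpow]
      have h1 := hn₀ (n+1) (by omega) (2 * approxd n t) (by
        calc 2 * approxd n t + 1 ≤ 2 * (N * 2^n) := by omega
          _ = N * 2^(n+1) := by rw [pow_succ]; ring)
      rw [dyad_comp] at h1
      rw [Real.dist_eq, abs_sub_comm]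
      exact h1
  have hcauchy : CauchySeq f := cauchySeq_of_le_geometric r _ hr1 hstep
  obtain ⟨l, hl⟩ := cauchySeq_tendsto_of_complete hcauchy
  refine ⟨l, ?_⟩
  have hl' : Filter.Tendsto (fun m => X (dyad (m+n₀) (approxd (m+n₀) t)) ω)
      Filter.atTop (𝓝 l) := by
    have : (fun m => X (dyad (m+n₀) (approxd (m+n₀) t)) ω) = f ∘ (fun m => m) ∘ id := by
      funext m
      rw [hfdef]
      simp [add_comm]
    simpa [add_comm] using hl
  exact (Filter.tendsto_add_atTop_iff_nat n₀).mp hl'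

lemma mod_ae {Ω : Type*} [MeasurableSpace Ω] (P : Measure Ω) [IsProbabilityMeasure P]
    (X : ℝ≥0 → Ω → ℝ)
    (hincr : ∀ s t : ℝ≥0, s ≤ t →
      Measure.map (fun ω => X t ω - X s ω) P = gaussianReal 0 (t - s))
    (t : ℝ≥0) :
    ∀ᵐ ω ∂P, Filter.Tendsto (fun n => X (dyad n (approxd n t)) ω) Filter.atTop (𝓝 (X t ω)) := by
  set r : ℝ := (2:ℝ)^(-((4:ℝ)⁻¹)) with hrdef
  have hr0 : 0 < r := Real.rpow_pos_of_pos (by norm_num) _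
  have hr1 : r < 1 := Real.rpow_lt_one_of_one_lt_of_neg (by norm_num) (by norm_num)
  set ρ : ℝ := 2 * r^2 with hρdef
  have hρ1 : 1 < ρ := rho_gt_one (by norm_num) (by norm_num)
  have hP : ∀ n : ℕ, P {ω | r^n ≤ |X t ω - X (dyad n (approxd n t)) ω|}
      ≤ ENNReal.ofReal ((1:ℝ) * 2^n * (2 * Real.exp (-ρ^n/4))) := by
    intro n
    have hst := approxd_le n t
    have hvar : ((t - dyad n (approxd n t) : ℝ≥0):ℝ) ≤ ((2:ℝ)^n)⁻¹ := by
      have h1 : t - dyad n (approxd n t) ≤ ((2:ℝ≥0)^n)⁻¹ :=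
        tsub_le_iff_left.mpr (le_approxd n t)
      calc ((t - dyad n (approxd n t) : ℝ≥0):ℝ) ≤ ((((2:ℝ≥0)^n)⁻¹ : ℝ≥0):ℝ) := by
            exact_mod_cast h1
        _ = ((2:ℝ)^n)⁻¹ := by push_cast; ring
    have hbound := prob_le P X hincr hst
      (by positivity : (0:ℝ) < ((2:ℝ)^n)⁻¹) hvar (pow_pos hr0 n)
    have hexp : -(r^n)^2 / (4 * ((2:ℝ)^n)⁻¹) = -ρ^n / 4 := by
      rw [hρdef, mul_pow]
      have h2n : ((2:ℝ)^n) ≠ 0 := by positivity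
      field_simp
      ring
    rw [hexp] at hbound
    apply le_trans hbound
    apply ENNReal.ofReal_le_ofReal
    have h1 : (1:ℝ) ≤ 2^n := one_le_pow₀ (by norm_num)
    nlinarith [Real.exp_pos (-ρ^n/4)]
  have htsum : ∑' n : ℕ, P {ω | r^n ≤ |X t ω - X (dyad n (approxd n t)) ω|} ≠ ⊤ := by
    apply ne_top_of_le_ne_top _ (ENNReal.tsum_le_tsum hP)
    rw [← ENNReal.ofReal_tsum_of_nonneg (fun n => by positivity)
      (sum_exp (by norm_num : (0:ℝ) ≤ 1) hρ1)]
    exact ENNReal.ofReal_ne_top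
  have hzero := measure_setOf_frequently_eq_zero htsum
  rw [ae_iff]
  apply measure_mono_null _ hzero
  intro ω hω
  simp only [Set.mem_setOf_eq] at hω ⊢
  by_contra hfreq
  apply hω
  rw [Filter.not_frequently] at hfreq
  have hdist : Filter.Tendsto (fun n => dist (X (dyad n (approxd n t)) ω) (X t ω))
      Filter.atTop (𝓝 0) := by
    apply squeeze_zero' (Filter.Eventually.of_forall fun n => dist_nonneg)
      (hfreq.mono fun n hn => ?_) (tendsto_pow_atTop_nhds_zero_of_lt_one hr0.le hr1)
    rw [Real.dist_eq, abs_sub_comm]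
    push_neg at hn
    exact hn.le
  exact tendsto_iff_dist_tendsto_zero.mpr hdist


lemma walk_bound {g : ℕ → ℕ → ℝ} {e : ℝ} {M n : ℕ}
    (hinc : ∀ k, k + 1 ≤ M → |g n (k+1) - g n k| ≤ e) :
    ∀ m a, a + m ≤ M → |g n (a+m) - g n a| ≤ m * e := by
  intro m
  induction m with
  | zero => intro a _; simp
  | succ m ih =>
    intro a h
    have h1 : a + m ≤ M := by omega
    have h2 : (a + m) + 1 ≤ M := by omega
    calc |g n (a+(m+1)) - g n a| = |(g n ((a+m)+1) - g n (a+m)) + (g n (a+m) - g n a)| := by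
          ring_nf
        _ ≤ |g n ((a+m)+1) - g n (a+m)| + |g n (a+m) - g n a| := abs_add_le _ _
        _ ≤ e + m * e := add_le_add (hinc _ h2) (ih a h1)
        _ = (↑(m+1)) * e := by push_cast; ring

lemma descent_bound {g : ℕ → ℕ → ℝ} (hcomp : ∀ n k, g (n+1) (2*k) = g n k)
    {r : ℝ} (hr0 : 0 ≤ r) {N n₀ : ℕ}
    (hinc : ∀ n, n₀ ≤ n → ∀ k, k + 1 ≤ N * 2^n → |g n (k+1) - g n k| ≤ r^n)
    (n L : ℕ) (hn₀ : n₀ ≤ n) (hnL : n ≤ L) :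
    ∀ j, j ≤ N * 2^L → |g L j - g n (j / 2^(L-n))| ≤ ∑ i ∈ Finset.Ico n L, r^(i+1) := by
  induction L, hnL using Nat.le_induction with
  | base => intro j hj; simp [Nat.sub_self]
  | succ L hL ih =>
    intro j hj
    set q := j / 2 with hq
    have hql : q ≤ N * 2^L := by
      rw [hq]
      have : j ≤ N * 2^L * 2 := by rw [mul_assoc, ← pow_succ]; exact hj
      omega
    have key1 : j / 2^(L+1-n) = q / 2^(L-n) := by
      rw [hq, Nat.div_div_eq_div_mul, Nat.succ_sub hL, pow_succ, mul_comm]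
    have step : |g (L+1) j - g L q| ≤ r^(L+1) := by
      have hmod := Nat.div_add_mod j 2
      have hlt : j % 2 < 2 := Nat.mod_lt _ (by norm_num)
      rcases (by omega : j % 2 = 0 ∨ j % 2 = 1) with h | h
      · have hj2 : j = 2 * q := by omega
        rw [hj2, hcomp]
        simp [pow_nonneg hr0]
      · have hj2 : j = 2 * q + 1 := by omega
        have := hinc (L+1) (le_trans hn₀ (by omega)) (2*q) (by omega)
        rw [hcomp] at this
        rw [hj2]; exact this
    calc |g (L+1) j - g n (j / 2^(L+1-n))|
        = |(g (L+1) j - g L q) + (g L q - g n (q / 2^(L-n)))| := by rw [key1]; ring_nf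
      _ ≤ |g (L+1) j - g L q| + |g L q - g n (q / 2^(L-n))| := abs_add_le _ _
      _ ≤ r^(L+1) + ∑ i ∈ Finset.Ico n L, r^(i+1) := add_le_add step (ih q hql)
      _ = ∑ i ∈ Finset.Ico n (L+1), r^(i+1) := by
          rw [Finset.sum_Ico_succ_top hL]; ring

lemma geom_tail {r : ℝ} (h0 : 0 ≤ r) (h1 : r < 1) (n L : ℕ) :
    ∑ i ∈ Finset.Ico n L, r^(i+1) ≤ (1-r)⁻¹ * r^n := by
  have hsum : ∀ M : ℕ, ∑ i ∈ Finset.range M, r^i ≤ (1-r)⁻¹ := by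
    intro M
    rw [geom_sum_eq (ne_of_lt h1)]
    have h2 : (0:ℝ) < 1 - r := by linarith
    have h3 : (r^M - 1)/(r - 1) = (1 - r^M)/(1-r) := by
      rw [← neg_div_neg_eq]; ring_nf
    rw [h3, div_le_iff₀ h2, inv_mul_cancel₀ (ne_of_gt h2)]
    have := pow_nonneg h0 M
    linarith
  calc ∑ i ∈ Finset.Ico n L, r^(i+1)
      = ∑ i ∈ Finset.range (L-n), r^((n+i)+1) := Finset.sum_Ico_eq_sum_range _ _ _
    _ ≤ ∑ i ∈ Finset.range (L-n), r^n * r^i := by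
        apply Finset.sum_le_sum
        intro i _
        rw [← pow_add]
        exact pow_le_pow_of_le_one h0 h1.le (by omega)
    _ = r^n * ∑ i ∈ Finset.range (L-n), r^i := by rw [Finset.mul_sum]
    _ ≤ r^n * (1-r)⁻¹ := by
        apply mul_le_mul_of_nonneg_left (hsum _) (pow_nonneg h0 n)
    _ = (1-r)⁻¹ * r^n := mul_comm _ _

lemma chain_main {g : ℕ → ℕ → ℝ} (hcomp : ∀ n k, g (n+1) (2*k) = g n k)
    {α : ℝ} (hα0 : 0 < α) (hα1 : α < 1) {N n₀ : ℕ} (hN : 1 ≤ N)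
    (hinc : ∀ n, n₀ ≤ n → ∀ k, k + 1 ≤ N * 2^n → |g n (k+1) - g n k| ≤ ((2:ℝ)^(-α))^n) :
    ∃ C : ℝ, 0 ≤ C ∧ ∀ L j j', n₀ ≤ L → j ≤ j' → j' ≤ N * 2^L →
      |g L j' - g L j| ≤ C * (((j':ℝ) - (j:ℝ))/2^L)^α := by
  set r : ℝ := (2:ℝ)^(-α) with hrdef
  have hr0 : 0 < r := Real.rpow_pos_of_pos (by norm_num) _
  have hr1 : r < 1 := Real.rpow_lt_one_of_one_lt_of_neg (by norm_num) (by linarith)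
  set c : ℝ := (1-r)⁻¹ with hcdef
  have hc0 : 0 < c := by rw [hcdef]; exact inv_pos.mpr (by linarith)
  set ρ : ℝ := (2:ℝ)^(1-α) with hρdef
  have hρ1 : (1:ℝ) ≤ ρ := by
    rw [hρdef]
    calc (1:ℝ) = (2:ℝ)^(0:ℝ) := (Real.rpow_zero 2).symm
      _ ≤ (2:ℝ)^(1-α) := Real.rpow_le_rpow_of_exponent_le (by norm_num) (by linarith)
  set C : ℝ := ((N:ℝ)+1)^(1-α) * ρ^n₀ + (1 + 2*c) * (2:ℝ)^α with hCdef
  have hC0 : 0 ≤ C := by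
    rw [hCdef]
    have h1 : (0:ℝ) ≤ ((N:ℝ)+1)^(1-α) := Real.rpow_nonneg (by positivity) _
    have h2 : (0:ℝ) ≤ (2:ℝ)^α := Real.rpow_nonneg (by norm_num) _
    positivity
  refine ⟨C, hC0, ?_⟩
  intro L j j' hn₀L hjj' hj'N
  rcases eq_or_lt_of_le hjj' with heq | hlt
  · subst heq
    simp only [sub_self, abs_zero, zero_div]
    rw [Real.zero_rpow (ne_of_gt hα0), mul_zero]
  -- now j < j'
  set δ : ℝ := ((j':ℝ) - (j:ℝ))/2^L with hδdef
  have h2L : (0:ℝ) < 2^L := by positivity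
  have hδ0 : 0 < δ := by
    rw [hδdef]
    apply div_pos _ h2L
    have : (j:ℝ) < j' := by exact_mod_cast hlt
    linarith
  have hδN : δ ≤ N := by
    rw [hδdef, div_le_iff₀ h2L]
    have h1 : (j':ℝ) ≤ (N:ℝ) * 2^L := by exact_mod_cast hj'N
    have h2 : (0:ℝ) ≤ (j:ℝ) := Nat.cast_nonneg _
    push_cast
    linarith
  have hδL : ((2:ℝ)^L)⁻¹ ≤ δ := by
    rw [hδdef, le_div_iff₀ h2L, inv_mul_cancel₀ (ne_of_gt h2L)]
    have : (j:ℝ) + 1 ≤ (j':ℝ) := by exact_mod_cast hlt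
    linarith
  have hpex : ∃ m : ℕ, 1 < δ * 2^(m+1) := by
    refine ⟨L, ?_⟩
    have : ((2:ℝ)^L)⁻¹ * 2^(L+1) = 2 := by
      rw [pow_succ]
      field_simp
    nlinarith [mul_le_mul_of_nonneg_right hδL (by positivity : (0:ℝ) ≤ (2:ℝ)^(L+1))]
  set n₁ : ℕ := Nat.find hpex with hn₁def
  have hp : 1 < δ * 2^(n₁+1) := Nat.find_spec hpex
  have F1 : n₁ ≤ L := Nat.find_min' hpex (by
    have : ((2:ℝ)^L)⁻¹ * 2^(L+1) = 2 := by rw [pow_succ]; field_simp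
    nlinarith [mul_le_mul_of_nonneg_right hδL (by positivity : (0:ℝ) ≤ (2:ℝ)^(L+1))])
  have F2 : δ * 2^n₁ ≤ (N:ℝ) + 1 := by
    rcases Nat.eq_zero_or_pos n₁ with h0 | h0
    · rw [h0]; simp; linarith
    · obtain ⟨m, hm⟩ : ∃ m, n₁ = m + 1 := ⟨n₁ - 1, by omega⟩
      have := Nat.find_min hpex (m := m) (by omega)
      push_neg at this
      rw [hm]
      have hN1 : (1:ℝ) ≤ (N:ℝ) + 1 := by have := Nat.cast_nonneg (α:=ℝ) N; linarith
      linarith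
  have F3 : r^n₁ ≤ (2*δ)^α := by
    have h2n : ((2:ℝ)^n₁)⁻¹ ≤ 2*δ := by
      have h1 : (1:ℝ) ≤ 2*δ * 2^n₁ := by
        calc (1:ℝ) ≤ δ * 2^(n₁+1) := hp.le
          _ = 2*δ * 2^n₁ := by rw [pow_succ]; ring
      have h2 : (2:ℝ)^n₁ * ((2:ℝ)^n₁)⁻¹ = 1 :=
        mul_inv_cancel₀ (ne_of_gt (pow_pos (by norm_num) _))
      nlinarith [pow_pos (show (0:ℝ) < 2 by norm_num) n₁,
        inv_nonneg.mpr (pow_nonneg (show (0:ℝ) ≤ 2 by norm_num) n₁)]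
    have hr_eq : r^n₁ = (((2:ℝ)^n₁)⁻¹)^α := by
      rw [hrdef, ← Real.rpow_natCast ((2:ℝ)^(-α)) n₁, ← Real.rpow_mul (by norm_num),
        ← Real.rpow_natCast (2:ℝ) n₁, ← Real.rpow_neg (by norm_num),
        ← Real.rpow_mul (by norm_num)]
      ring_nf
    rw [hr_eq]
    exact Real.rpow_le_rpow (by positivity) h2n hα0.le
  set n : ℕ := max n₀ n₁ with hndef
  have hnL : n ≤ L := max_le hn₀L F1
  have hn₀n : n₀ ≤ n := le_max_left _ _
  -- descent bounds
  have hdes : ∀ m, m ≤ N * 2^L → |g L m - g n (m / 2^(L-n))| ≤ c * r^n := fun m hm =>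
    le_trans (descent_bound hcomp hr0.le hinc n L hn₀n hnL m hm) (geom_tail hr0.le hr1 n L)
  set a : ℕ := j / 2^(L-n) with hadef
  set a' : ℕ := j' / 2^(L-n) with ha'def
  have haa' : a ≤ a' := Nat.div_le_div_right hjj'
  have ha'N : a' ≤ N * 2^n := by
    rw [ha'def]
    have h1 : j' ≤ N * 2^n * 2^(L-n) := by
      rw [mul_assoc, ← pow_add]
      rwa [Nat.add_sub_cancel' hnL]
    calc j' / 2^(L-n) ≤ N * 2^n * 2^(L-n) / 2^(L-n) := Nat.div_le_div_right h1
      _ = N * 2^n := Nat.mul_div_cancel _ (pow_pos (by norm_num) _)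
  -- middle walk
  have hmid : |g n a' - g n a| ≤ ((a':ℝ) - a) * r^n := by
    have h1 := walk_bound (M := N * 2^n) (g := g) (n := n) (e := r^n)
      (fun k hk => hinc n hn₀n k hk) (a' - a) a (by omega)
    rw [Nat.add_sub_cancel' haa'] at h1
    have : ((a' - a : ℕ):ℝ) = (a':ℝ) - a := by
      push_cast [Nat.cast_sub haa']; ring
    rw [← this]; exact h1
  -- F4
  have F4 : (a':ℝ) - a ≤ δ * 2^n + 1 := by
    have h2Ln : (0:ℝ) < (2:ℝ)^(L-n) := by positivity
    have hup : (a':ℝ) ≤ (j':ℝ) / 2^(L-n) := by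
      rw [ha'def, le_div_iff₀ h2Ln]
      exact_mod_cast Nat.div_mul_le_self j' (2^(L-n))
    have hlow : (j:ℝ) / 2^(L-n) - 1 ≤ (a:ℝ) := by
      rw [hadef, sub_le_iff_le_add, div_le_iff₀ h2Ln]
      have hlt := Nat.lt_div_mul_add (a := j) (b := 2^(L-n)) (by positivity)
      calc (j:ℝ) ≤ ((j / 2^(L-n) * 2^(L-n) + 2^(L-n) : ℕ):ℝ) := by exact_mod_cast hlt.le
        _ = (((j / 2^(L-n) : ℕ):ℝ) + 1) * 2^(L-n) := by push_cast; ring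
    have hsplit : ((2:ℝ)^L) = 2^n * 2^(L-n) := by
      rw [← pow_add, Nat.add_sub_cancel' hnL]
    have : (j':ℝ)/2^(L-n) - (j:ℝ)/2^(L-n) = δ * 2^n := by
      rw [hδdef, hsplit]
      field_simp
    linarith
  -- assemble
  have main : |g L j' - g L j| ≤ (δ * 2^n + 1) * r^n + 2 * (c * r^n) := by
    calc |g L j' - g L j|
        = |(g L j' - g n a') + ((g n a' - g n a) + (g n a - g L j))| := by ring_nf
      _ ≤ |g L j' - g n a'| + |(g n a' - g n a) + (g n a - g L j)| := abs_add_le _ _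
      _ ≤ |g L j' - g n a'| + (|g n a' - g n a| + |g n a - g L j|) :=
          add_le_add_right (abs_add_le _ _) _
      _ ≤ c * r^n + (((a':ℝ) - a) * r^n + c * r^n) := by
          have h1 := hdes j' hj'N
          have h2 := hdes j (le_trans hjj' hj'N)
          rw [abs_sub_comm] at h2
          exact add_le_add h1 (add_le_add hmid h2)
      _ ≤ c * r^n + ((δ * 2^n + 1) * r^n + c * r^n) := by
          have := mul_le_mul_of_nonneg_right F4 (pow_nonneg hr0.le n)
          linarith
      _ = (δ * 2^n + 1) * r^n + 2 * (c * r^n) := by ring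
  -- term bounds
  have hrn_pos : (0:ℝ) < r^n := pow_pos hr0 n
  have term2 : r^n ≤ (2:ℝ)^α * δ^α := by
    have h1 : r^n ≤ r^n₁ := pow_le_pow_of_le_one hr0.le hr1.le (le_max_right _ _)
    calc r^n ≤ r^n₁ := h1
      _ ≤ (2*δ)^α := F3
      _ = (2:ℝ)^α * δ^α := Real.mul_rpow (by norm_num) hδ0.le
  have term1 : δ * 2^n * r^n ≤ δ^α * (((N:ℝ)+1)^(1-α) * ρ^n₀) := by
    have hkey : (2:ℝ)^n * r^n = ρ^n := by
      rw [hρdef, hrdef, ← mul_pow]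
      congr 1
      have h2 : (2:ℝ)^(1-α) = (2:ℝ)^(1:ℝ) * (2:ℝ)^(-α) := by
        rw [← Real.rpow_add (by norm_num : (0:ℝ) < 2)]; ring_nf
      rw [h2, Real.rpow_one]
    have hρn : ρ^n ≤ ρ^n₀ * ρ^n₁ := by
      rw [← pow_add]
      exact pow_le_pow_right₀ hρ1 (by omega)
    have hsplit : δ = δ^α * δ^(1-α) := by
      rw [← Real.rpow_add hδ0]; norm_num
    have hδn₁ : δ^(1-α) * ((2:ℝ)^n₁)^(1-α) ≤ ((N:ℝ)+1)^(1-α) := by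
      rw [← Real.mul_rpow hδ0.le (by positivity)]
      exact Real.rpow_le_rpow (by positivity) F2 (by linarith)
    have hρn₁ : (ρ:ℝ)^n₁ = ((2:ℝ)^n₁)^(1-α) := by
      rw [hρdef, ← Real.rpow_natCast ((2:ℝ)^(1-α)) n₁, ← Real.rpow_mul (by norm_num),
        ← Real.rpow_natCast (2:ℝ) n₁, ← Real.rpow_mul (by norm_num)]
      ring_nf
    have e : δ * (ρ^n₀ * ρ^n₁) = δ^α * (δ^(1-α) * ((2:ℝ)^n₁)^(1-α)) * ρ^n₀ := by
      rw [← hρn₁]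
      conv_lhs => rw [hsplit]
      ring
    have hρn₀0 : (0:ℝ) ≤ ρ^n₀ := by positivity
    have hδα0 : (0:ℝ) ≤ δ^α := Real.rpow_nonneg hδ0.le _
    calc δ * 2^n * r^n = δ * ρ^n := by rw [mul_assoc, hkey]
      _ ≤ δ * (ρ^n₀ * ρ^n₁) := by gcongr
      _ = δ^α * (δ^(1-α) * ((2:ℝ)^n₁)^(1-α)) * ρ^n₀ := e
      _ ≤ δ^α * (((N:ℝ)+1)^(1-α)) * ρ^n₀ := by
          apply mul_le_mul_of_nonneg_right _ hρn₀0
          exact mul_le_mul_of_nonneg_left hδn₁ hδα0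
      _ = δ^α * (((N:ℝ)+1)^(1-α) * ρ^n₀) := by ring
  have hδα0 : (0:ℝ) ≤ δ^α := Real.rpow_nonneg hδ0.le _
  calc |g L j' - g L j| ≤ (δ * 2^n + 1) * r^n + 2 * (c * r^n) := main
    _ = δ * 2^n * r^n + (1 + 2*c) * r^n := by ring
    _ ≤ δ^α * (((N:ℝ)+1)^(1-α) * ρ^n₀) + (1 + 2*c) * ((2:ℝ)^α * δ^α) := by
        apply add_le_add term1
        apply mul_le_mul_of_nonneg_left term2 (by linarith)
    _ = C * δ^α := by rw [hCdef]; ring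
/-- Hölder continuity of Brownian paths: a process `X` with `X 0 = 0` a.s. whose increments
`X t − X s` (for `s ≤ t`) have law `gaussianReal 0 (t − s)` admits a modification `Y`
whose sample paths are, for every `0 < α < 1/2`, almost surely Hölder continuous of
exponent `α` on every compact interval `[0, T]`. -/
theorem brownian_holder_continuity
    {Ω : Type*} [MeasurableSpace Ω] (P : Measure Ω) [IsProbabilityMeasure P]
    (X : ℝ≥0 → Ω → ℝ)
    (h0 : ∀ᵐ ω ∂P, X 0 ω = 0)
    (hincr : ∀ s t : ℝ≥0, s ≤ t →
      Measure.map (fun ω => X t ω - X s ω) P = gaussianReal 0 (t - s)) :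
    ∃ Y : ℝ≥0 → Ω → ℝ,
      (∀ t : ℝ≥0, ∀ᵐ ω ∂P, Y t ω = X t ω) ∧
      ∀ α : ℝ, 0 < α → α < 1 / 2 →
        ∀ᵐ ω ∂P, ∀ T : ℝ≥0, ∃ C : ℝ, 0 ≤ C ∧
          ∀ s t : ℝ≥0, s ≤ T → t ≤ T →
            |Y t ω - Y s ω| ≤ C * |(t : ℝ) - (s : ℝ)| ^ α := by
  classical
  set Y : ℝ≥0 → Ω → ℝ :=
    fun t ω => limUnder Filter.atTop (fun n => X (dyad n (approxd n t)) ω) with hYdef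
  refine ⟨Y, ?_, ?_⟩
  · intro t
    filter_upwards [mod_ae P X hincr t] with ω hω
    simp only [hYdef]
    exact hω.limUnder_eq
  · intro α hα0 hα2
    have hae : ∀ᵐ ω ∂P, ∀ N : ℕ, ∀ᶠ n : ℕ in Filter.atTop, ∀ k, k + 1 ≤ N * 2^n →
        |X (dyad n (k+1)) ω - X (dyad n k) ω| ≤ ((2:ℝ)^(-α))^n := by
      rw [ae_all_iff]
      exact fun N => good_event P X hincr hα0 hα2 N
    filter_upwards [hae] with ω hω
    intro T
    have hconv : ∀ t : ℝ≥0, Filter.Tendsto (fun n => X (dyad n (approxd n t)) ω)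
        Filter.atTop (𝓝 (Y t ω)) := by
      intro t
      obtain ⟨l, hl⟩ := conv_good X hα0 hα2 ω hω t
      have : Y t ω = l := by simp only [hYdef]; exact hl.limUnder_eq
      rw [this]
      exact hl
    set N : ℕ := ⌊T⌋₊ + 1 with hNdef
    have hTN : T < (N:ℝ≥0) := by
      have := Nat.lt_succ_floor T
      rw [hNdef]
      exact_mod_cast this
    obtain ⟨n₀, hn₀⟩ := Filter.eventually_atTop.mp (hω N)
    obtain ⟨C, hC0, hCb⟩ := chain_main (g := fun n k => X (dyad n k) ω)
      (fun n k => by show X (dyad (n+1) (2*k)) ω = X (dyad n k) ω; rw [dyad_comp]) hα0 (by linarith) (by omega : 1 ≤ N)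
      (fun n hn k hk => hn₀ n hn k hk)
    refine ⟨C, hC0, ?_⟩
    have key : ∀ s t : ℝ≥0, s ≤ t → t ≤ T →
        |Y t ω - Y s ω| ≤ C * ((t:ℝ) - (s:ℝ))^α := by
      intro s t hst htT
      have habs : Filter.Tendsto
          (fun n => |X (dyad n (approxd n t)) ω - X (dyad n (approxd n s)) ω|)
          Filter.atTop (𝓝 (|Y t ω - Y s ω|)) := ((hconv t).sub (hconv s)).abs
      have hrhs : Filter.Tendsto (fun n : ℕ => C * (((t:ℝ) - (s:ℝ)) + ((2:ℝ)^n)⁻¹)^α)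
          Filter.atTop (𝓝 (C * ((t:ℝ) - (s:ℝ))^α)) := by
        have h2 : Filter.Tendsto (fun n : ℕ => ((2:ℝ)^n)⁻¹) Filter.atTop (𝓝 0) := by
          have h3 := tendsto_pow_atTop_nhds_zero_of_lt_one (by norm_num : (0:ℝ) ≤ 1/2)
            (by norm_num : (1:ℝ)/2 < 1)
          convert h3 using 2 with n
          rw [one_div, inv_pow]
        have hbase : Filter.Tendsto (fun n : ℕ => ((t:ℝ) - (s:ℝ)) + ((2:ℝ)^n)⁻¹)
            Filter.atTop (𝓝 ((t:ℝ) - (s:ℝ))) := by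
          simpa using tendsto_const_nhds.add h2
        have hcont : ContinuousAt (fun x : ℝ => C * x^α) ((t:ℝ) - (s:ℝ)) :=
          continuousAt_const.mul (Real.continuousAt_rpow_const _ _ (Or.inr hα0.le))
        exact hcont.tendsto.comp hbase
      apply le_of_tendsto_of_tendsto habs hrhs
      rw [Filter.EventuallyLE, Filter.eventually_atTop]
      refine ⟨n₀, fun n hn => ?_⟩
      have hts : t < (N:ℝ≥0) := lt_of_le_of_lt htT hTN
      have h1 : approxd n s ≤ approxd n t := approxd_mono n hst
      have h2 : approxd n t ≤ N * 2^n := (approxd_lt hts).le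
      have h3 := hCb n (approxd n s) (approxd n t) hn h1 h2
      refine le_trans h3 ?_
      apply mul_le_mul_of_nonneg_left _ hC0
      have h2np : (0:ℝ) < (2:ℝ)^n := by positivity
      have hnum : (0:ℝ) ≤ (approxd n t : ℝ) - (approxd n s : ℝ) := by
        have : (approxd n s : ℝ) ≤ (approxd n t : ℝ) := by exact_mod_cast h1
        linarith
      apply Real.rpow_le_rpow (div_nonneg hnum (by positivity)) _ hα0.le
      have e1 : (approxd n t : ℝ) ≤ (t:ℝ) * 2^n := by
        have h4 : (approxd n t : ℝ≥0) ≤ t * (2:ℝ≥0)^n := by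
          rw [approxd]; exact Nat.floor_le (zero_le)
        exact_mod_cast h4
      have e2 : (s:ℝ) * 2^n - 1 ≤ (approxd n s : ℝ) := by
        have h5 : s * (2:ℝ≥0)^n < (approxd n s : ℝ≥0) + 1 := by
          rw [approxd]; exact Nat.lt_floor_add_one _
        have h6 : (s:ℝ) * (2:ℝ)^n < (approxd n s : ℝ) + 1 := by exact_mod_cast h5
        linarith
      rw [div_le_iff₀ h2np]
      have expand : (((t:ℝ) - (s:ℝ)) + ((2:ℝ)^n)⁻¹) * 2^n = (t:ℝ)*2^n - (s:ℝ)*2^n + 1 := by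
        field_simp
      linarith
    intro s t hsT htT
    rcases le_total s t with h | h
    · have h2 := key s t h htT
      rwa [abs_of_nonneg (sub_nonneg.mpr (NNReal.coe_le_coe.mpr h))]
    · have h2 := key t s h hsT
      rw [abs_sub_comm ((t:ℝ)) ((s:ℝ)), abs_of_nonneg (sub_nonneg.mpr (NNReal.coe_le_coe.mpr h)),
        abs_sub_comm]
      exact h2
end

section
/- Brownian paths are not Hölder continuous of any exponent greater than 1/2: let (Ω, P) be a probability space and X : ℝ≥0 → Ω → ℝ a stochastic process with almost surely continuous paths, X 0 = 0 almost surely, independent increments (for any finite sequence of times t₀ ≤ t₁ ≤ … ≤ t_k, the random variables X t₁ − X t₀, …, X t_k − X t_{k−1} are independent), and such that for all 0 ≤ s ≤ t the law of X t − X s is gaussianReal 0 (t − s). Then for every α with 1/2 < α ≤ 1, almost surely there is no constant C such that the path t ↦ X t ω is Hölder continuous with constant C and exponent α on [0, 1]. -/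
open MeasureTheory ProbabilityTheory NNReal Real Filter

/-- The Gaussian measure of a symmetric interval is at most `ε / √v`. -/
lemma gaussianReal_Icc_le (v : ℝ≥0) (hv : v ≠ 0) (ε : ℝ) (hε : 0 ≤ ε) :
    gaussianReal 0 v (Set.Icc (-ε) ε) ≤ ENNReal.ofReal (ε / Real.sqrt v) := by
  have hv0 : (0:ℝ) < (v:ℝ) := NNReal.coe_pos.2 (zero_lt_iff.2 hv)
  have hsv : 0 < Real.sqrt v := Real.sqrt_pos.2 hv0
  rw [gaussianReal_of_var_ne_zero _ hv, withDensity_apply _ measurableSet_Icc]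
  have hpdf : ∀ x, gaussianPDF 0 v x ≤ ENNReal.ofReal ((Real.sqrt (2 * π * v))⁻¹) := by
    intro x
    refine ENNReal.ofReal_le_ofReal ?_
    have : Real.exp (- (x - 0)^2 / (2 * v)) ≤ 1 := by
      rw [Real.exp_le_one_iff]
      have : (0:ℝ) ≤ (x - 0)^2 / (2 * v) := by positivity
      linarith [neg_div (2 * (v:ℝ)) ((x-0)^2)]
    calc gaussianPDFReal 0 v x = (Real.sqrt (2 * π * v))⁻¹ * Real.exp (- (x - 0)^2 / (2 * v)) :=
          rfl
      _ ≤ (Real.sqrt (2 * π * v))⁻¹ * 1 := by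
          gcongr
      _ = (Real.sqrt (2 * π * v))⁻¹ := mul_one _
  have h1 : 2 * Real.sqrt v ≤ Real.sqrt (2 * π * v) := by
    have h4 : (4:ℝ) * v ≤ 2 * π * v := by nlinarith [Real.pi_gt_three, hv0.le]
    have : Real.sqrt (4 * v) ≤ Real.sqrt (2 * π * v) := Real.sqrt_le_sqrt h4
    calc 2 * Real.sqrt v = Real.sqrt 4 * Real.sqrt v := by
          rw [show (4:ℝ) = 2^2 by norm_num, Real.sqrt_sq (by norm_num : (0:ℝ) ≤ 2)]
      _ = Real.sqrt (4 * v) := (Real.sqrt_mul (by norm_num) _).symm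
      _ ≤ _ := this
  calc ∫⁻ x in Set.Icc (-ε) ε, gaussianPDF 0 v x
      ≤ ∫⁻ _ in Set.Icc (-ε) ε, ENNReal.ofReal ((Real.sqrt (2 * π * v))⁻¹) :=
        lintegral_mono fun x => hpdf x
    _ = ENNReal.ofReal ((Real.sqrt (2 * π * v))⁻¹) * volume (Set.Icc (-ε) ε) :=
        setLIntegral_const _ _
    _ = ENNReal.ofReal ((Real.sqrt (2 * π * v))⁻¹) * ENNReal.ofReal (ε - -ε) := by
        rw [Real.volume_Icc]
    _ = ENNReal.ofReal ((Real.sqrt (2 * π * v))⁻¹ * (ε - -ε)) :=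
        (ENNReal.ofReal_mul (by positivity)).symm
    _ ≤ ENNReal.ofReal (ε / Real.sqrt v) := by
        refine ENNReal.ofReal_le_ofReal ?_
        have hinv : (Real.sqrt (2 * π * v))⁻¹ ≤ (2 * Real.sqrt v)⁻¹ :=
          inv_anti₀ (by positivity) h1
        calc (Real.sqrt (2 * π * v))⁻¹ * (ε - -ε) ≤ (2 * Real.sqrt v)⁻¹ * (ε - -ε) := by
              have : (0:ℝ) ≤ ε - -ε := by linarith
              exact mul_le_mul_of_nonneg_right hinv this
          _ = ε / Real.sqrt v := by field_simp; ring

/-- Brownian paths are not Hölder continuous of any exponent greater than `1/2`: for a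
process with a.s. continuous paths, `X 0 = 0` a.s., independent increments, and Gaussian
increments `X t − X s ∼ gaussianReal 0 (t − s)`, for every `1/2 < α ≤ 1`, almost surely no
constant `C` makes the path `t ↦ X t ω` Hölder continuous with constant `C` and exponent
`α` on `[0, 1]`. -/
theorem brownian_not_holder_above_half
    {Ω : Type*} [MeasurableSpace Ω] (P : Measure Ω) [IsProbabilityMeasure P]
    (X : ℝ≥0 → Ω → ℝ)
    (hcont : ∀ᵐ ω ∂P, Continuous fun t : ℝ≥0 => X t ω)
    (h0 : ∀ᵐ ω ∂P, X 0 ω = 0)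
    (hindep : ∀ (k : ℕ) (t : Fin (k + 1) → ℝ≥0), Monotone t →
      iIndepFun
        (fun i : Fin k => fun ω => X (t i.succ) ω - X (t i.castSucc) ω) P)
    (hincr : ∀ s t : ℝ≥0, s ≤ t →
      Measure.map (fun ω => X t ω - X s ω) P = gaussianReal 0 (t - s)) :
    ∀ α : ℝ, 1 / 2 < α → α ≤ 1 →
      ∀ᵐ ω ∂P, ¬ ∃ C : ℝ,
        ∀ s t : ℝ≥0, s ≤ 1 → t ≤ 1 →
          |X t ω - X s ω| ≤ C * |(t : ℝ) - (s : ℝ)| ^ α := by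
  intro α hα _hα1
  rw [ae_iff]
  simp only [not_not]
  -- the Hölder sets with natural constants
  set A : ℕ → Set Ω := fun m =>
    {ω | ∀ s t : ℝ≥0, s ≤ 1 → t ≤ 1 → |X t ω - X s ω| ≤ (m : ℝ) * |(t : ℝ) - (s : ℝ)| ^ α}
    with hA
  have hsub : {ω | ∃ C : ℝ, ∀ s t : ℝ≥0, s ≤ 1 → t ≤ 1 →
      |X t ω - X s ω| ≤ C * |(t : ℝ) - (s : ℝ)| ^ α} ⊆ ⋃ m : ℕ, A m := by
    rintro ω ⟨C, hC⟩
    refine Set.mem_iUnion.2 ⟨⌈C⌉₊, fun s t hs ht => ?_⟩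
    refine (hC s t hs ht).trans ?_
    have : (0:ℝ) ≤ |(t : ℝ) - (s : ℝ)| ^ α := Real.rpow_nonneg (abs_nonneg _) _
    exact mul_le_mul_of_nonneg_right (Nat.le_ceil C) this
  refine measure_mono_null hsub (measure_iUnion_null fun m => ?_)
  -- key: for every `n ≥ 1`, `P (A m) ≤ (m * n ^ (1/2 - α)) ^ n`
  have key : ∀ n : ℕ, 0 < n →
      P (A m) ≤ ENNReal.ofReal ((m : ℝ) * (n : ℝ) ^ ((1:ℝ)/2 - α)) ^ n := by
    intro n hn
    have hnR : (0:ℝ) < (n : ℝ) := by exact_mod_cast hn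
    have hnN : (0:ℝ≥0) < (n : ℝ≥0) := by exact_mod_cast hn
    set t : Fin (n + 1) → ℝ≥0 := fun j => (j : ℕ) / (n : ℝ≥0) with ht
    have hmono : Monotone t := by
      intro j k hjk
      simp only [ht, div_eq_mul_inv]
      exact mul_le_mul_left (by exact_mod_cast hjk) _
    have ht1 : ∀ j, t j ≤ 1 := by
      intro j
      rw [ht]
      rw [div_le_one hnN]
      exact_mod_cast j.is_le
    set Y : Fin n → Ω → ℝ := fun i ω => X (t i.succ) ω - X (t i.castSucc) ω with hY
    set ε : ℝ := (m : ℝ) * ((n : ℝ)⁻¹) ^ α with hε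
    have hε0 : 0 ≤ ε := by
      apply mul_nonneg (Nat.cast_nonneg _)
      exact Real.rpow_nonneg (by positivity) _
    -- A m ⊆ ⋂ i, Y i ⁻¹' Icc (-ε) ε
    have hsub2 : A m ⊆ ⋂ i : Fin n, Y i ⁻¹' Set.Icc (-ε) ε := by
      intro ω hω
      rw [Set.mem_iInter]
      intro i
      have h := hω (t i.castSucc) (t i.succ) (ht1 _) (ht1 _)
      have hcoe : ((t i.succ : ℝ≥0) : ℝ) - ((t i.castSucc : ℝ≥0) : ℝ) = (n : ℝ)⁻¹ := by
        simp only [ht, NNReal.coe_div, NNReal.coe_natCast, Fin.val_succ, Fin.coe_castSucc]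
        push_cast
        field_simp
        ring
      rw [hcoe] at h
      have habs : |(n : ℝ)⁻¹| = (n : ℝ)⁻¹ := abs_of_nonneg (by positivity)
      rw [habs] at h
      simp only [Set.mem_preimage, Set.mem_Icc, ← abs_le]
      exact h
    -- independence gives the product bound
    have hprod : P (⋂ i : Fin n, Y i ⁻¹' Set.Icc (-ε) ε)
        = ∏ i : Fin n, P (Y i ⁻¹' Set.Icc (-ε) ε) := by
      have h := (hindep n t hmono).measure_inter_preimage_eq_mul
        (S := Finset.univ) (sets := fun _ => Set.Icc (-ε) ε)
        (fun i _ => measurableSet_Icc)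
      simpa using h
    -- each factor is small
    have hfac : ∀ i : Fin n, P (Y i ⁻¹' Set.Icc (-ε) ε)
        ≤ ENNReal.ofReal ((m : ℝ) * (n : ℝ) ^ ((1:ℝ)/2 - α)) := by
      intro i
      have hle : t i.castSucc ≤ t i.succ := hmono (Fin.castSucc_lt_succ : i.castSucc < i.succ).le
      have hmap := hincr (t i.castSucc) (t i.succ) hle
      have hd : t i.succ - t i.castSucc = 1 / (n : ℝ≥0) := by
        simp only [ht, Fin.val_succ, Fin.coe_castSucc]
        rw [← tsub_div]
        congr 1
        push_cast
        rw [add_comm]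
        exact add_tsub_cancel_right _ _
      rw [hd] at hmap
      have haem : AEMeasurable (Y i) P := by
        by_contra h
        rw [hY] at h
        rw [Measure.map_of_not_aemeasurable h] at hmap
        exact (IsProbabilityMeasure.ne_zero (gaussianReal 0 (1 / (n:ℝ≥0)))) hmap.symm
      have hmeas : P (Y i ⁻¹' Set.Icc (-ε) ε)
          = gaussianReal 0 (1 / (n : ℝ≥0)) (Set.Icc (-ε) ε) := by
        rw [← hmap, Measure.map_apply_of_aemeasurable haem measurableSet_Icc]
      rw [hmeas]
      have hvne : (1 / (n : ℝ≥0)) ≠ 0 := by positivity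
      refine (gaussianReal_Icc_le _ hvne ε hε0).trans ?_
      refine ENNReal.ofReal_le_ofReal (le_of_eq ?_)
      have hcoe : ((1 / (n : ℝ≥0) : ℝ≥0) : ℝ) = (n : ℝ)⁻¹ := by push_cast; ring
      rw [hcoe, Real.sqrt_inv, div_eq_mul_inv, inv_inv, hε, Real.sqrt_eq_rpow, mul_assoc,
        Real.inv_rpow hnR.le, ← Real.rpow_neg hnR.le, ← Real.rpow_add hnR]
      congr 1
      ring
    calc P (A m) ≤ P (⋂ i : Fin n, Y i ⁻¹' Set.Icc (-ε) ε) := measure_mono hsub2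
      _ = ∏ i : Fin n, P (Y i ⁻¹' Set.Icc (-ε) ε) := hprod
      _ ≤ ∏ _i : Fin n, ENNReal.ofReal ((m : ℝ) * (n : ℝ) ^ ((1:ℝ)/2 - α)) :=
          Finset.prod_le_prod' fun i _ => hfac i
      _ = ENNReal.ofReal ((m : ℝ) * (n : ℝ) ^ ((1:ℝ)/2 - α)) ^ n := by
          rw [Finset.prod_const, Finset.card_univ, Fintype.card_fin]
  -- conclude: choose large n
  have hlim : Tendsto (fun n : ℕ => (m : ℝ) * (n : ℝ) ^ ((1:ℝ)/2 - α)) atTop (nhds 0) := by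
    have h1 : Tendsto (fun x : ℝ => x ^ ((1:ℝ)/2 - α)) atTop (nhds 0) := by
      have : (1:ℝ)/2 - α = -(α - 1/2) := by ring
      rw [this]
      exact tendsto_rpow_neg_atTop (by linarith)
    have h2 := (h1.comp tendsto_natCast_atTop_atTop).const_mul (m : ℝ)
    simpa using h2
  have hev : ∀ᶠ n : ℕ in atTop, (m : ℝ) * (n : ℝ) ^ ((1:ℝ)/2 - α) ≤ 1/2 :=
    hlim.eventually (eventually_le_nhds (by norm_num))
  obtain ⟨N, hN⟩ := hev.exists_forall_of_atTop
  have hbound : ∀ n : ℕ, max N 1 ≤ n → P (A m) ≤ ENNReal.ofReal (1/2) ^ n := by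
    intro n hn
    have hn1 : 0 < n := lt_of_lt_of_le (by norm_num) ((le_max_right N 1).trans hn)
    refine (key n hn1).trans ?_
    exact pow_le_pow_left' (ENNReal.ofReal_le_ofReal (hN n ((le_max_left N 1).trans hn))) n
  have htend : Tendsto (fun n : ℕ => ENNReal.ofReal (1/2) ^ n) atTop (nhds 0) := by
    refine ENNReal.tendsto_pow_atTop_nhds_zero_of_lt_one ?_
    rw [show (1:ENNReal) = ENNReal.ofReal 1 by simp]
    exact (ENNReal.ofReal_lt_ofReal_iff_of_nonneg (by norm_num)).2 (by norm_num)
  have : P (A m) ≤ 0 :=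
    ge_of_tendsto htend (eventually_atTop.2 ⟨max N 1, hbound⟩)
  exact le_antisymm this zero_le
end
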